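/- arXiv:2103.00377 — 2 statements merged into one kernel-verified Lean document; each statement's English description precedes it below -/
import Mathlib

section
/- Let G be a finite group with normal subgroups M and N such that M ≤ N, and let φ ∈ Irr(M) and θ ∈ Irr(N) satisfy θ = Ind^N_M φ. Then G_θ = N · G_φ and G_φ ∩ N = M. -/
noncomputable section

open CategoryTheory Pointwise

/-- `χ : G → ℂ` is an irreducible (complex) character of the group `G`, i.e. the character of
some simple finite-dimensional complex representation of `G`. -/
def IsIrrChar (G : Type) [Group G] (χ : G → ℂ) : Prop :=
  ∃ V : FDRep ℂ G, Simple V ∧ χ = FDRep.character V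

open Classical in
/-- The character of `L` induced from the (virtual) character `φ` of `K`,
given by the usual induction formula `Ind_K^L φ (g) = |K|⁻¹ ∑_{x ∈ L} φ°(x g x⁻¹)`. -/
def IndChar {G : Type} [Group G] (K L : Subgroup G) (φ : ↥K → ℂ) : ↥L → ℂ :=
  fun g => (Nat.card ↥K : ℂ)⁻¹ *
    ∑ᶠ x : ↥L, if h : (x : G) * ↑g * (x : G)⁻¹ ∈ K then φ ⟨(x : G) * ↑g * (x : G)⁻¹, h⟩ else 0

/-- The stabilizer in `G` of (the `G`-conjugation orbit of) a class function `φ` on the normal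
subgroup `K` of `G`. -/
def charStab {G : Type} [Group G] (K : Subgroup G) (hK : K.Normal) (φ : ↥K → ℂ) :
    Subgroup G where
  carrier := {g | ∀ (x : G) (hx : x ∈ K) (hx' : g * x * g⁻¹ ∈ K),
    φ ⟨g * x * g⁻¹, hx'⟩ = φ ⟨x, hx⟩}
  one_mem' := by
    intro x hx hx'
    have h1 : (⟨1 * x * 1⁻¹, hx'⟩ : ↥K) = ⟨x, hx⟩ := Subtype.ext (by group)
    rw [h1]
  mul_mem' := by
    rintro a b ha hb x hx hx'
    have hb' : b * x * b⁻¹ ∈ K := hK.conj_mem x hx b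
    have ha' : a * (b * x * b⁻¹) * a⁻¹ ∈ K := hK.conj_mem _ hb' a
    have key : (⟨a * b * x * (a * b)⁻¹, hx'⟩ : ↥K) = ⟨a * (b * x * b⁻¹) * a⁻¹, ha'⟩ :=
      Subtype.ext (by group)
    rw [key, ha _ hb' ha']
    exact hb x hx hb'
  inv_mem' := by
    rintro a ha x hx hx'
    have h2 : a * (a⁻¹ * x * a⁻¹⁻¹) * a⁻¹ ∈ K := hK.conj_mem _ hx' a
    have key : (⟨a * (a⁻¹ * x * a⁻¹⁻¹) * a⁻¹, h2⟩ : ↥K) = ⟨x, hx⟩ := Subtype.ext (by group)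
    have h3 := ha _ hx' h2
    rw [key] at h3
    exact h3.symm

/-- The irreducible character `φ` of the subgroup `K` of `G` extends to the (larger)
subgroup `L`: there is an irreducible character of `L` restricting to `φ` on `K`. -/
def CharExtends {G : Type} [Group G] (K L : Subgroup G) (φ : ↥K → ℂ) : Prop :=
  ∃ χ : ↥L → ℂ, IsIrrChar ↥L χ ∧ ∀ (g : G) (hK : g ∈ K) (hL : g ∈ L), χ ⟨g, hL⟩ = φ ⟨g, hK⟩

/-!
Conjugating by `g ∈ G` commutes with inducing from `M` to `N`, so `G_φ ≤ G_θ`; and `N ≤ G_θ`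
because `θ` is a class function. Conversely, Frobenius reciprocity together with
`Res θ = |M|⁻¹ ∑_{t ∈ N} φ^t` gives `⟨Ind ψ, θ⟩ = |M|⁻¹ · #{t ∈ N | φ^t = ψ}` for every
irreducible `ψ` of `M`. For `ψ = φ`, `⟨θ, θ⟩ = 1` forces `|N_φ| = |M|`, hence `N_φ = M`; for
`ψ = φ^g` with `g ∈ G_θ` (so that `Ind ψ = θ`) it yields `t ∈ N` with `φ^g = φ^t`, i.e.
`g ∈ G_φ N`.
-/

namespace IsIrrChar

variable {H : Type} [Group H] {χ : H → ℂ}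

theorem comp_mulEquiv (hχ : IsIrrChar H χ) (e : H ≃* H) : IsIrrChar H (χ ∘ e) := by
  obtain ⟨V, hV, rfl⟩ := hχ
  exact ⟨(Action.res _ e.toMonoidHom).obj V, simple_obj (Action.resEquiv _ e).functor V, rfl⟩

theorem apply_conj (hχ : IsIrrChar H χ) (g h : H) : χ (h * g * h⁻¹) = χ g := by
  obtain ⟨V, -, rfl⟩ := hχ
  exact FDRep.char_conj V g h

end IsIrrChar

def charInner (H : Type) [Group H] [Fintype H] (f g : H → ℂ) : ℂ :=
  (Nat.card H : ℂ)⁻¹ * ∑ x, f x * g x⁻¹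

theorem charInner_eq_ite {H : Type} [Group H] [Fintype H] {χ ψ : H → ℂ}
    (hχ : IsIrrChar H χ) (hψ : IsIrrChar H ψ) :
    charInner H χ ψ = if χ = ψ then 1 else 0 := by
  obtain ⟨V, hV, rfl⟩ := hχ
  obtain ⟨W, hW, rfl⟩ := hψ
  have : Invertible (Nat.card H : ℂ) := invertibleOfNonzero (by exact_mod_cast Nat.card_pos.ne')
  have orth := FDRep.char_orthonormal V W
  by_cases hVW : Nonempty (V ≅ W)
  · rw [if_pos (FDRep.char_iso hVW.some), charInner, orth, if_pos hVW]
  · have hself := FDRep.char_orthonormal V V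
    rw [if_pos ⟨Iso.refl V⟩] at hself
    rw [if_neg hVW] at orth
    rw [charInner, orth, if_neg]
    intro h
    rw [← h, hself] at orth
    exact one_ne_zero orth

section Conjugation

variable {G : Type} [Group G] {K : Subgroup G} [K.Normal]

def conjChar (g : G) (φ : K → ℂ) : K → ℂ :=
  φ ∘ MulAut.conjNormal g

theorem conjChar_apply (g : G) (φ : K → ℂ) (k : K) :
    conjChar g φ k = φ ⟨g * k * g⁻¹, Subgroup.Normal.conj_mem ‹_› _ k.2 g⟩ :=
  congrArg φ (Subtype.ext (MulAut.conjNormal_apply g k))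

theorem conjChar_one (φ : K → ℂ) : conjChar 1 φ = φ := by
  funext k
  simp [conjChar]

theorem conjChar_mul (a b : G) (φ : K → ℂ) : conjChar (a * b) φ = conjChar b (conjChar a φ) := by
  funext k
  simp [conjChar, map_mul]

theorem mem_charStab_iff (φ : K → ℂ) (g : G) :
    g ∈ charStab K ‹_› φ ↔ conjChar g φ = φ := by
  refine ⟨fun hg => funext fun k => ?_, fun hg x hx hx' => ?_⟩
  · rw [conjChar_apply]
    exact hg k k.2 _
  · rw [← congrFun hg ⟨x, hx⟩, conjChar_apply]

theorem IsIrrChar.conjChar {φ : K → ℂ} (hφ : IsIrrChar K φ) (g : G) :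
    IsIrrChar K (_root_.conjChar g φ) :=
  hφ.comp_mulEquiv _

theorem IsIrrChar.le_charStab {φ : K → ℂ} (hφ : IsIrrChar K φ) : K ≤ charStab K ‹_› φ :=
  fun k hk => (mem_charStab_iff φ k).2 <| funext fun x => by
    rw [conjChar_apply]
    exact hφ.apply_conj x ⟨k, hk⟩

end Conjugation

section Induction

variable {G : Type} [Group G]

open Classical in
def extendByZero (K : Subgroup G) (φ : K → ℂ) (g : G) : ℂ :=
  if h : g ∈ K then φ ⟨g, h⟩ else 0

theorem extendByZero_of_mem {K : Subgroup G} (φ : K → ℂ) {g : G} (hg : g ∈ K) :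
    extendByZero K φ g = φ ⟨g, hg⟩ :=
  dif_pos hg

theorem extendByZero_of_notMem {K : Subgroup G} (φ : K → ℂ) {g : G} (hg : g ∉ K) :
    extendByZero K φ g = 0 :=
  dif_neg hg

theorem extendByZero_conjChar {K : Subgroup G} [hK : K.Normal] (g : G) (φ : K → ℂ) (x : G) :
    extendByZero K (conjChar g φ) x = extendByZero K φ (g * x * g⁻¹) := by
  by_cases hx : x ∈ K
  · rw [extendByZero_of_mem _ hx, extendByZero_of_mem _ (hK.conj_mem x hx g), conjChar_apply]
  · have hx' : g * x * g⁻¹ ∉ K := fun h => hx (by simpa [mul_assoc] using hK.conj_mem' _ h g)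
    rw [extendByZero_of_notMem _ hx, extendByZero_of_notMem _ hx']

theorem indChar_apply (K L : Subgroup G) (φ : K → ℂ) (g : L) :
    IndChar K L φ g = (Nat.card K : ℂ)⁻¹ * ∑ᶠ x : L, extendByZero K φ (x * g * x⁻¹) :=
  rfl

theorem conjChar_indChar {M N : Subgroup G} [M.Normal] [N.Normal] (g : G) (φ : M → ℂ) :
    conjChar g (IndChar M N φ) = IndChar M N (conjChar g φ) := by
  funext n
  rw [conjChar_apply, indChar_apply, indChar_apply,
    ← finsum_comp_equiv (MulAut.conjNormal (H := N) g).toEquiv]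
  congr 2
  funext x
  simp only [extendByZero_conjChar, MulEquiv.toEquiv_eq_coe, EquivLike.coe_coe,
    MulAut.conjNormal_apply, Subgroup.coe_inv]
  group

theorem indChar_inclusion {M N : Subgroup G} [M.Normal] [Fintype N] (hMN : M ≤ N) (φ : M → ℂ)
    (m : M) :
    IndChar M N φ (Subgroup.inclusion hMN m) =
      (Nat.card M : ℂ)⁻¹ * ∑ t : N, conjChar (t : G) φ m := by
  rw [indChar_apply, finsum_eq_sum_of_fintype]
  congr 1
  refine Fintype.sum_congr _ _ fun t => ?_
  rw [Subgroup.coe_inclusion, Subgroup.coe_inv, ← extendByZero_conjChar,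
    extendByZero_of_mem _ m.2]

end Induction

section Frobenius

variable {G : Type} [Group G] {M N : Subgroup G} [Fintype M] [Fintype N]

theorem charInner_indChar (hMN : M ≤ N) (ψ : M → ℂ) (θ : N → ℂ)
    (hθ : ∀ g h : N, θ (h * g * h⁻¹) = θ g) :
    charInner N (IndChar M N ψ) θ = charInner M ψ (θ ∘ Subgroup.inclusion hMN) := by
  have conj_invariant : ∀ x : N, ∑ n : N, extendByZero M ψ (x * n * x⁻¹) * θ n⁻¹ =
      ∑ n : N, extendByZero M ψ n * θ n⁻¹ := by
    intro x
    refine Eq.trans (Fintype.sum_congr _ _ fun n => ?_)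
      ((MulAut.conj x).toEquiv.sum_comp fun n => extendByZero M ψ n * θ n⁻¹)
    simp only [MulEquiv.toEquiv_eq_coe, EquivLike.coe_coe, MulAut.conj_apply, Subgroup.coe_mul,
      mul_inv_rev, inv_inv, ← mul_assoc, hθ]
  have restrict : ∑ n : N, extendByZero M ψ n * θ n⁻¹ =
      ∑ m : M, ψ m * θ (Subgroup.inclusion hMN m)⁻¹ := by
    refine (Fintype.sum_of_injective _ (Subgroup.inclusion_injective hMN) _ _ ?_ fun m => ?_).symm
    · rintro n hn
      rw [extendByZero_of_notMem, zero_mul]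
      exact fun h => hn ⟨⟨n, h⟩, rfl⟩
    · rw [Subgroup.coe_inclusion, extendByZero_of_mem _ m.2]
  have hN : (Nat.card N : ℂ) ≠ 0 := by exact_mod_cast Nat.card_pos.ne'
  calc charInner N (IndChar M N ψ) θ
      = (Nat.card N : ℂ)⁻¹ * (Nat.card M : ℂ)⁻¹ *
          ∑ x : N, ∑ n : N, extendByZero M ψ (x * n * x⁻¹) * θ n⁻¹ := by
        simp only [charInner, indChar_apply, finsum_eq_sum_of_fintype, Finset.sum_mul,
          Finset.mul_sum]
        rw [Finset.sum_comm]
        ring_nf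
    _ = (Nat.card N : ℂ)⁻¹ * (Nat.card M : ℂ)⁻¹ *
          (Nat.card N * ∑ m : M, ψ m * θ (Subgroup.inclusion hMN m)⁻¹) := by
        simp only [conj_invariant, restrict, Finset.sum_const, Finset.card_univ,
          Nat.card_eq_fintype_card, nsmul_eq_mul]
    _ = charInner M ψ (θ ∘ Subgroup.inclusion hMN) := by
        rw [charInner, mul_comm _ (Nat.card M : ℂ)⁻¹, mul_assoc, inv_mul_cancel_left₀ hN]
        rfl

end Frobenius

section Stabilizer

open Finset

variable {G : Type} [Group G] {M N : Subgroup G} [hM : M.Normal] {φ : M → ℂ}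

theorem charStab_le_charStab_indChar [hN : N.Normal] :
    charStab M hM φ ≤ charStab N hN (IndChar M N φ) := fun g hg => by
  rw [mem_charStab_iff] at hg ⊢
  rw [conjChar_indChar, hg]

variable [Fintype M] [Fintype N]

open Classical in
theorem charInner_indChar_indChar (hMN : M ≤ N) {ψ : M → ℂ} (hφ : IsIrrChar M φ)
    (hψ : IsIrrChar M ψ) (hθ : IsIrrChar N (IndChar M N φ)) :
    charInner N (IndChar M N ψ) (IndChar M N φ) =
      (Nat.card M : ℂ)⁻¹ * #{t : N | conjChar (t : G) φ = ψ} := by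
  calc charInner N (IndChar M N ψ) (IndChar M N φ)
      = charInner M ψ (IndChar M N φ ∘ Subgroup.inclusion hMN) :=
        charInner_indChar hMN ψ _ hθ.apply_conj
    _ = (Nat.card M : ℂ)⁻¹ * ∑ t : N, charInner M ψ (conjChar (t : G) φ) := by
        simp only [charInner, Function.comp_apply, indChar_inclusion, Finset.mul_sum]
        rw [Finset.sum_comm]
        ring_nf
    _ = (Nat.card M : ℂ)⁻¹ * #{t : N | conjChar (t : G) φ = ψ} := by
        simp only [charInner_eq_ite hψ (hφ.conjChar _), eq_comm (a := ψ), Finset.sum_boole]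

open Classical in
theorem card_conjChar_eq_of_indChar_eq (hMN : M ≤ N) {ψ : M → ℂ} (hφ : IsIrrChar M φ)
    (hψ : IsIrrChar M ψ) (hθ : IsIrrChar N (IndChar M N φ))
    (hind : IndChar M N ψ = IndChar M N φ) :
    #{t : N | conjChar (t : G) φ = ψ} = Nat.card M := by
  have h := charInner_indChar_indChar hMN hφ hψ hθ
  rw [hind, charInner_eq_ite hθ hθ, if_pos rfl, eq_inv_mul_iff_mul_eq₀ (by simp), mul_one] at h
  exact_mod_cast h.symm

theorem charStab_inf_eq (hMN : M ≤ N) (hφ : IsIrrChar M φ)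
    (hθ : IsIrrChar N (IndChar M N φ)) : charStab M hM φ ⊓ N = M := by
  classical
  have hle : M.subgroupOf N ≤ (charStab M hM φ).subgroupOf N :=
    Subgroup.subgroupOf_mono N hφ.le_charStab
  have hcard : Nat.card ((charStab M hM φ).subgroupOf N) ≤ Nat.card (M.subgroupOf N) := by
    rw [Nat.card_congr (Subgroup.subgroupOfEquivOfLe hMN).toEquiv,
      ← card_conjChar_eq_of_indChar_eq hMN hφ hφ hθ rfl, ← Fintype.card_subtype,
      ← Nat.card_eq_fintype_card]
    exact (Nat.card_congr <| Equiv.subtypeEquivRight fun t : N =>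
      Subgroup.mem_subgroupOf.trans (mem_charStab_iff φ (t : G))).le
  have heq := Subgroup.eq_of_le_of_card_ge hle hcard
  rwa [Subgroup.subgroupOf_inj, inf_of_le_left hMN, eq_comm] at heq

theorem charStab_indChar_eq_sup [hN : N.Normal] (hMN : M ≤ N) (hφ : IsIrrChar M φ)
    (hθ : IsIrrChar N (IndChar M N φ)) :
    charStab N hN (IndChar M N φ) = N ⊔ charStab M hM φ := by
  refine le_antisymm (fun g hg => ?_) (sup_le hθ.le_charStab charStab_le_charStab_indChar)
  rw [mem_charStab_iff, conjChar_indChar] at hg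
  obtain ⟨t, ht⟩ : ∃ t : N, conjChar (t : G) φ = conjChar g φ := by
    classical
    have hpos : 0 < #{t : N | conjChar (t : G) φ = conjChar g φ} := by
      rw [card_conjChar_eq_of_indChar_eq hMN hφ (hφ.conjChar g) hθ hg]
      exact Nat.card_pos
    obtain ⟨t, ht⟩ := card_pos.1 hpos
    exact ⟨t, (mem_filter.1 ht).2⟩
  have hs : g * (t : G)⁻¹ ∈ charStab M hM φ := by
    rw [mem_charStab_iff, conjChar_mul, ← ht, ← conjChar_mul, mul_inv_cancel, conjChar_one]
  simpa using mul_mem (Subgroup.mem_sup_right hs) (Subgroup.mem_sup_left t.2)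

end Stabilizer

/-- Let `G` be a finite group with normal subgroups `M ≤ N`, and let
`φ ∈ Irr(M)` and `θ ∈ Irr(N)` satisfy `θ = Ind^N_M φ`. Then `G_θ = N · G_φ` and
`G_φ ∩ N = M`. -/
theorem stabilizer_of_induced_char
    (G : Type) [Group G] [Fintype G]
    (M N : Subgroup G) (hM : M.Normal) (hN : N.Normal) (hMN : M ≤ N)
    (φ : ↥M → ℂ) (θ : ↥N → ℂ)
    (hφ : IsIrrChar ↥M φ) (hθ : IsIrrChar ↥N θ)
    (hind : θ = IndChar M N φ) :
    (charStab N hN θ : Set G) = (N : Set G) * (charStab M hM φ : Set G) ∧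
      charStab M hM φ ⊓ N = M := by
  classical
  subst hind
  rw [charStab_indChar_eq_sup hMN hφ hθ, Subgroup.normal_mul]
  exact ⟨rfl, charStab_inf_eq hMN hφ hθ⟩
end
end

section
/- Let O be a complete discrete valuation ring with residue field k, let d be an integer, and let C be a bounded cochain complex of finitely generated free O-modules such that H^i(C) = 0 for all i ≠ d and H^i(C ⊗_O k) = 0 for all i ≠ d. Then H^d(C) is a finitely generated free O-module. -/
/-!
Exactness of `C ⊗_O k` in degree `d - 1` shows that a uniformizer `ϖ` acts injectively on the
cokernel of `d^{d-1}`, hence on its submodule `H^d(C)`. So `H^d(C)` is a finitely generated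
torsion-free module over the principal ideal domain `O`, hence free.
-/

universe u v

open IsLocalRing Pointwise

namespace TensorProduct

variable {R M : Type*} [CommRing R] [AddCommGroup M] [Module R M] (I : Ideal R)

theorem quot_one_tmul_surjective : Function.Surjective fun m : M => (1 : R ⧸ I) ⊗ₜ[R] m :=
  (quotTensorEquivQuotSMul M I).symm.surjective.comp (Submodule.mkQ_surjective _)

theorem quot_one_tmul_eq_zero_iff {m : M} :
    (1 : R ⧸ I) ⊗ₜ[R] m = 0 ↔ m ∈ I • (⊤ : Submodule R M) := by
  rw [← quotTensorEquivQuotSMul_symm_mk, LinearEquiv.map_eq_zero_iff,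
    Submodule.Quotient.mk_eq_zero]

end TensorProduct

namespace LinearMap

variable {R M₁ M₂ M₃ : Type*} [CommRing R]
  [AddCommGroup M₁] [Module R M₁] [AddCommGroup M₂] [Module R M₂] [AddCommGroup M₃] [Module R M₃]

/-- If `x • v = f y`, then `1 ⊗ y` is a cycle mod `x`, hence `y ≡ g z` mod `x`, say
`y - g z = x • w`; applying `f` gives `x • v = x • f w`, and `x` cancels. -/
theorem isSMulRegular_quotient_range_of_exact_baseChange {x : R} {I : Ideal R}
    (hI : I = Ideal.span {x}) {g : M₁ →ₗ[R] M₂} {f : M₂ →ₗ[R] M₃} (hfg : f ∘ₗ g = 0)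
    (hx : IsSMulRegular M₃ x)
    (hexact : Function.Exact (g.baseChange (R ⧸ I)) (f.baseChange (R ⧸ I))) :
    IsSMulRegular (M₃ ⧸ range f) x := by
  subst hI
  refine isSMulRegular_iff_right_eq_zero_of_smul.mpr fun v hv => ?_
  obtain ⟨v, rfl⟩ := Submodule.mkQ_surjective _ v
  rw [Submodule.mkQ_apply, ← Submodule.Quotient.mk_smul, Submodule.Quotient.mk_eq_zero] at hv
  rw [Submodule.mkQ_apply, Submodule.Quotient.mk_eq_zero]
  obtain ⟨y, hy⟩ := hv
  have hcycle : f.baseChange (R ⧸ Ideal.span {x}) (1 ⊗ₜ y) = 0 := by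
    rw [baseChange_tmul, hy, TensorProduct.tmul_smul, TensorProduct.smul_tmul',
      ← Algebra.algebraMap_eq_smul_one, Ideal.Quotient.algebraMap_eq,
      Ideal.Quotient.eq_zero_iff_mem.mpr (Ideal.mem_span_singleton_self x), TensorProduct.zero_tmul]
  obtain ⟨t, ht⟩ := (hexact _).mp hcycle
  obtain ⟨z, rfl⟩ := TensorProduct.quot_one_tmul_surjective _ t
  have hyz : y - g z ∈ Ideal.span {x} • (⊤ : Submodule R M₂) := by
    rw [← TensorProduct.quot_one_tmul_eq_zero_iff, TensorProduct.tmul_sub, ← ht, baseChange_tmul,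
      sub_self]
  rw [Submodule.ideal_span_singleton_smul, Submodule.mem_smul_pointwise_iff_exists] at hyz
  obtain ⟨w, -, hw⟩ := hyz
  refine ⟨w, hx (?_ : x • f w = x • v)⟩
  have hfgz : f (g z) = 0 := by rw [← comp_apply, hfg, zero_apply]
  rw [← map_smul, hw, map_sub, hy, hfgz, sub_zero]

end LinearMap

theorem IsSMulRegular.quotient_comap_subtype {R M : Type*} [Ring R] [AddCommGroup M] [Module R M]
    {p K : Submodule R M} {r : R} (h : IsSMulRegular (M ⧸ p) r) :
    IsSMulRegular (K ⧸ p.comap K.subtype) r := by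
  refine h.of_injective ((p.comap K.subtype).mapQ p K.subtype le_rfl) ?_
  rw [← LinearMap.ker_eq_bot, Submodule.ker_mapQ, Submodule.mkQ_map_self]

theorem IsDiscreteValuationRing.isTorsionFree_of_isSMulRegular {R M : Type*} [CommRing R]
    [IsDomain R] [IsDiscreteValuationRing R] [AddCommGroup M] [Module R M] {ϖ : R}
    (hϖ : Irreducible ϖ) (h : IsSMulRegular M ϖ) : Module.IsTorsionFree R M where
  isSMulRegular r hr := by
    obtain ⟨n, u, rfl⟩ := eq_unit_mul_pow_irreducible hr.ne_zero hϖ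
    exact (u.isUnit.isSMulRegular M).mul (h.pow n)

theorem top_cohomology_finite_free_of_concentrated_cohomology_general
    (O : Type u) [CommRing O] [IsDomain O] [IsDiscreteValuationRing O]
    (X : ℤ → Type v) [∀ i, AddCommGroup (X i)] [∀ i, Module O (X i)]
    [∀ i, Module.Free O (X i)] [∀ i, Module.Finite O (X i)]
    (dd : ∀ i j : ℤ, X i →ₗ[O] X j)
    (hdd : ∀ i j l : ℤ, (dd j l).comp (dd i j) = 0)
    (d : ℤ)
    -- `H^i(C ⊗_O k) = 0` for `i ≠ d`:
    (hk : ∀ i : ℤ, i ≠ d →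
      Function.Exact ((dd (i - 1) i).baseChange (ResidueField O))
        ((dd i (i + 1)).baseChange (ResidueField O))) :
    -- `H^d(C) = ker(d^d) / im(d^{d-1})` is finitely generated and free over `O`:
    Module.Free O
      (↥(LinearMap.ker (dd d (d + 1))) ⧸
        (LinearMap.range (dd (d - 1) d)).comap (LinearMap.ker (dd d (d + 1))).subtype) ∧
    Module.Finite O
      (↥(LinearMap.ker (dd d (d + 1))) ⧸
        (LinearMap.range (dd (d - 1) d)).comap (LinearMap.ker (dd d (d + 1))).subtype) := by
  obtain ⟨ϖ, hϖ⟩ := IsDiscreteValuationRing.exists_irreducible O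
  have hexact := hk (d - 1) (by omega)
  rw [sub_add_cancel] at hexact
  have hcoker : IsSMulRegular (X d ⧸ LinearMap.range (dd (d - 1) d)) ϖ :=
    LinearMap.isSMulRegular_quotient_range_of_exact_baseChange
      ((IsDiscreteValuationRing.irreducible_iff_uniformizer ϖ).mp hϖ) (hdd _ _ _)
      (IsSMulRegular.of_ne_zero hϖ.ne_zero) hexact
  have : Module.IsTorsionFree O _ := IsDiscreteValuationRing.isTorsionFree_of_isSMulRegular hϖ
    (hcoker.quotient_comap_subtype (K := LinearMap.ker (dd d (d + 1))))
  exact ⟨inferInstance, inferInstance⟩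

/-- Let `O` be a complete discrete valuation ring with residue field `k`, let
`d` be an integer, and let `C` be a bounded cochain complex of finitely generated free
`O`-modules such that `H^i(C) = 0` for all `i ≠ d` and `H^i(C ⊗_O k) = 0` for all `i ≠ d`.
Then `H^d(C)` is a finitely generated free `O`-module.

The complex `C` is encoded by its components `X i` together with maps `dd i j : X i → X j`
which vanish unless `j = i + 1` (as in `Mathlib`'s `HomologicalComplex`); vanishing of the
`i`-th cohomology of a complex is encoded as exactness at the `i`-th spot, and `C ⊗_O k` is
obtained by base change along `O → k = O/𝔪`. -/
theorem top_cohomology_finite_free_of_concentrated_cohomology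
    (O : Type u) [CommRing O] [IsDomain O] [IsDiscreteValuationRing O]
    [IsAdicComplete (maximalIdeal O) O]
    (X : ℤ → Type v) [∀ i, AddCommGroup (X i)] [∀ i, Module O (X i)]
    [∀ i, Module.Free O (X i)] [∀ i, Module.Finite O (X i)]
    (dd : ∀ i j : ℤ, X i →ₗ[O] X j)
    (hshape : ∀ i j : ℤ, j ≠ i + 1 → dd i j = 0)
    (hdd : ∀ i j l : ℤ, (dd j l).comp (dd i j) = 0)
    (hbdd : ∃ a b : ℤ, (∀ i < a, Subsingleton (X i)) ∧ (∀ i, b < i → Subsingleton (X i)))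
    (d : ℤ)
    -- `H^i(C) = 0` for `i ≠ d`:
    (hO : ∀ i : ℤ, i ≠ d → Function.Exact (dd (i - 1) i) (dd i (i + 1)))
    -- `H^i(C ⊗_O k) = 0` for `i ≠ d`:
    (hk : ∀ i : ℤ, i ≠ d →
      Function.Exact ((dd (i - 1) i).baseChange (ResidueField O))
        ((dd i (i + 1)).baseChange (ResidueField O))) :
    -- `H^d(C) = ker(d^d) / im(d^{d-1})` is finitely generated and free over `O`:
    Module.Free O
      (↥(LinearMap.ker (dd d (d + 1))) ⧸
        (LinearMap.range (dd (d - 1) d)).comap (LinearMap.ker (dd d (d + 1))).subtype) ∧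
    Module.Finite O
      (↥(LinearMap.ker (dd d (d + 1))) ⧸
        (LinearMap.range (dd (d - 1) d)).comap (LinearMap.ker (dd d (d + 1))).subtype) :=
  top_cohomology_finite_free_of_concentrated_cohomology_general O X dd hdd d hk
end
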